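/- arXiv:2102.02846 — 5 statements merged into one kernel-verified Lean document; each statement's English description precedes it below -/
import Mathlib

section
/- Let $S_1,\ldots,S_M$ be independent exponential random variables where $S_i$ has rate $r_i/\mathbb{E}[T]$ with $r_i > 0$ and $\mathbb{E}[T] > 0$, and let $t_s \geq 0$. Then $\mathbb{P}(S_i \geq S_l + t_s \text{ for all } i \neq l) = \frac{r_l e^{r_l t_s/\mathbb{E}[T]}}{e^{(\sum_{i=1}^M r_i) t_s/\mathbb{E}[T]} \sum_{i=1}^M r_i}$. -/
/-!
Condition on `S l = x`. By independence, all other sources wake up after `x + t_s` with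
probability `exp (-b (x + t_s))`, where `b` is the sum of their rates, because the minimum of
independent exponentials is exponential with the summed rate. Integrating this against the
density `a exp (-a x)` of `S l` gives `a / (a + b) * exp (-b t_s)`.
-/

open MeasureTheory ProbabilityTheory

namespace ProbabilityTheory

open Set Real

lemma expMeasure_eq_withDensity (c : ℝ) :
    expMeasure c = volume.withDensity (exponentialPDF c) := rfl

lemma measurable_exponentialPDF (c : ℝ) : Measurable (exponentialPDF c) :=
  (measurable_exponentialPDFReal c).ennreal_ofReal

lemma expMeasure_Ioi {c : ℝ} (hc : 0 < c) {t : ℝ} (ht : 0 ≤ t) :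
    expMeasure c (Ioi t) = ENNReal.ofReal (exp (-(c * t))) := by
  have := isProbabilityMeasure_expMeasure hc
  have hle : exp (-(c * t)) ≤ 1 := exp_le_one_iff.2 (by nlinarith)
  rw [← compl_Iic, prob_compl_eq_one_sub measurableSet_Iic, ← ofReal_cdf, cdf_expMeasure_eq hc,
    if_pos ht, ← ENNReal.ofReal_one, ← ENNReal.ofReal_sub _ (by linarith)]
  ring_nf

lemma expMeasure_Ici {c : ℝ} (hc : 0 < c) {t : ℝ} (ht : 0 ≤ t) :
    expMeasure c (Ici t) = ENNReal.ofReal (exp (-(c * t))) := by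
  rw [← expMeasure_Ioi hc ht, expMeasure_eq_withDensity]
  exact measure_congr ((withDensity_absolutelyContinuous _ _).ae_eq Ioi_ae_eq_Ici).symm

lemma ae_nonneg_expMeasure (c : ℝ) : ∀ᵐ x ∂expMeasure c, 0 ≤ x := by
  simp only [ae_iff, not_le]
  exact (withDensity_apply _ measurableSet_Iio).trans (lintegral_exponentialPDF_of_nonpos le_rfl)

lemma lintegral_exp_neg_mul_expMeasure {a b : ℝ} (ha : 0 < a) (hb : 0 ≤ b) :
    ∫⁻ x, ENNReal.ofReal (exp (-(b * x))) ∂expMeasure a = ENNReal.ofReal (a / (a + b)) := by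
  have hab : 0 < a + b := by linarith
  -- `a e^{-ax} e^{-bx}` is `a / (a + b)` times the density of `Exp(a + b)`.
  have hpdf (x : ℝ) : exponentialPDF a x * ENNReal.ofReal (exp (-(b * x)))
      = ENNReal.ofReal (a / (a + b)) * exponentialPDF (a + b) x := by
    rcases lt_or_ge x 0 with hx | hx
    · simp [exponentialPDF_of_neg hx]
    rw [exponentialPDF_of_nonneg hx, exponentialPDF_of_nonneg hx,
      ← ENNReal.ofReal_mul (by positivity), ← ENNReal.ofReal_mul (by positivity)]
    congr 1
    field_simp
    rw [← exp_add]; ring_nf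
  rw [expMeasure_eq_withDensity, lintegral_withDensity_eq_lintegral_mul _
    (measurable_exponentialPDF a) (by fun_prop)]
  simp only [Pi.mul_apply, hpdf]
  rw [lintegral_const_mul _ (measurable_exponentialPDF _), lintegral_exponentialPDF_eq_one hab,
    mul_one]

variable {Ω : Type*} [MeasurableSpace Ω] {μ : Measure Ω}

lemma IndepFun.measure_prodMk_preimage_eq_lintegral {α β : Type*} [MeasurableSpace α]
    [MeasurableSpace β] [IsFiniteMeasure μ] {X : Ω → α} {Y : Ω → β} (hXY : IndepFun X Y μ)
    (hX : Measurable X) (hY : Measurable Y) {B : Set (α × β)} (hB : MeasurableSet B) :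
    μ ((fun ω ↦ (X ω, Y ω)) ⁻¹' B) = ∫⁻ x, μ.map Y (Prod.mk x ⁻¹' B) ∂μ.map X := by
  rw [← Measure.map_apply (hX.prodMk hY) hB,
    (indepFun_iff_map_prod_eq_prod_map_map hX.aemeasurable hY.aemeasurable).1 hXY,
    Measure.prod_apply hB]

lemma iIndepFun.measure_biInter_Ici_of_expMeasure {ι : Type*} {S : ι → Ω → ℝ} {rate : ι → ℝ}
    (hS : iIndepFun S μ) (hmeas : ∀ i, Measurable (S i)) (hrate : ∀ i, 0 < rate i)
    (hexp : ∀ i, μ.map (S i) = expMeasure (rate i)) (T : Finset ι) {x : ℝ} (hx : 0 ≤ x) :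
    μ (⋂ i ∈ T, S i ⁻¹' Ici x) = ENNReal.ofReal (exp (-((∑ i ∈ T, rate i) * x))) := by
  have htail (i : ι) : μ (S i ⁻¹' Ici x) = ENNReal.ofReal (exp (-(rate i * x))) := by
    rw [← Measure.map_apply (hmeas i) measurableSet_Ici, hexp i, expMeasure_Ici (hrate i) hx]
  rw [hS.meas_biInter fun i _ ↦ ⟨Ici x, measurableSet_Ici, rfl⟩, Finset.prod_congr rfl
    fun i _ ↦ htail i, ← ENNReal.ofReal_prod_of_nonneg fun i _ ↦ (exp_pos _).le, ← exp_sum,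
    Finset.sum_mul, Finset.sum_neg_distrib]

theorem iIndepFun.measure_forall_add_le_of_expMeasure {ι : Type*} [Fintype ι] [DecidableEq ι]
    [IsProbabilityMeasure μ] {S : ι → Ω → ℝ} {rate : ι → ℝ} (hS : iIndepFun S μ)
    (hmeas : ∀ i, Measurable (S i)) (hrate : ∀ i, 0 < rate i)
    (hexp : ∀ i, μ.map (S i) = expMeasure (rate i)) (l : ι) {t : ℝ} (ht : 0 ≤ t) :
    μ {ω | ∀ i, i ≠ l → S l ω + t ≤ S i ω} = ENNReal.ofReal
      (rate l / (∑ i, rate i) * exp (-((∑ i ∈ Finset.univ.erase l, rate i) * t))) := by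
  set T := Finset.univ.erase l
  set b := ∑ i ∈ T, rate i
  let V : Ω → T → ℝ := fun ω i ↦ S i ω
  let B : Set (ℝ × (T → ℝ)) := {p | ∀ i, p.1 + t ≤ p.2 i}
  have hV : Measurable V := measurable_pi_iff.2 fun i ↦ hmeas i
  have hB : MeasurableSet B := by
    simp only [B, ofPred_forall]
    exact .iInter fun i ↦ measurableSet_le (by fun_prop) (by fun_prop)
  have hevent : {ω | ∀ i, i ≠ l → S l ω + t ≤ S i ω} = (fun ω ↦ (S l ω, V ω)) ⁻¹' B := by
    ext ω
    simp [B, V, T]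
  have hindep : IndepFun (S l) V μ :=
    (hS.indepFun_finset {l} T (by simp [T]) hmeas).comp (ψ := id)
      (measurable_pi_apply (⟨l, Finset.mem_singleton_self l⟩ : ({l} : Finset ι)))
      measurable_id
  have hslice {x : ℝ} (hx : 0 ≤ x) :
      μ.map V (Prod.mk x ⁻¹' B) = ENNReal.ofReal (exp (-(b * (x + t)))) := by
    rw [Measure.map_apply hV (hB.preimage measurable_prodMk_left),
      ← hS.measure_biInter_Ici_of_expMeasure hmeas hrate hexp T (by positivity)]
    congr 1
    ext ω
    simp [B, V]
  have hb : 0 ≤ b := Finset.sum_nonneg fun i _ ↦ (hrate i).le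
  calc μ {ω | ∀ i, i ≠ l → S l ω + t ≤ S i ω}
      = ∫⁻ x, μ.map V (Prod.mk x ⁻¹' B) ∂expMeasure (rate l) := by
        rw [hevent, hindep.measure_prodMk_preimage_eq_lintegral (hmeas l) hV hB, hexp l]
    _ = ∫⁻ x, ENNReal.ofReal (exp (-(b * t))) * ENNReal.ofReal (exp (-(b * x)))
          ∂expMeasure (rate l) := by
        refine lintegral_congr_ae ((ae_nonneg_expMeasure _).mono fun x hx ↦ ?_)
        dsimp only
        rw [hslice hx, ← ENNReal.ofReal_mul (exp_pos _).le, ← exp_add]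
        ring_nf
    _ = ENNReal.ofReal (rate l / (∑ i, rate i) * exp (-(b * t))) := by
        rw [lintegral_const_mul _ (by fun_prop), lintegral_exp_neg_mul_expMeasure (hrate l) hb,
          ← ENNReal.ofReal_mul (exp_pos _).le, Finset.add_sum_erase _ _ (Finset.mem_univ l),
          mul_comm]

end ProbabilityTheory

theorem stmt_4_general {Ω : Type*} [MeasureSpace Ω] (hΩ : IsProbabilityMeasure (ℙ : Measure Ω))
    (M : ℕ) (r : Fin M → ℝ) (hr : ∀ i, 0 < r i)
    (ET ts : ℝ) (hET : 0 < ET) (hts : 0 ≤ ts)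
    (S : Fin M → Ω → ℝ) (hmeas : ∀ i, Measurable (S i))
    (hindep : iIndepFun S ℙ)
    (hexp : ∀ i, Measure.map (S i) ℙ = expMeasure (r i / ET))
    (l : Fin M) :
    ℙ {ω | ∀ i, i ≠ l → S l ω + ts ≤ S i ω} =
      ENNReal.ofReal (r l * Real.exp (r l * ts / ET) /
        (Real.exp ((∑ i, r i) * ts / ET) * ∑ i, r i)) := by
  rw [hindep.measure_forall_add_le_of_expMeasure hmeas (fun i ↦ div_pos (hr i) hET) hexp l hts,
    ← Finset.sum_div, ← Finset.sum_div]
  set R := ∑ i ∈ Finset.univ.erase l, r i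
  have hsum : ∑ i, r i = r l + R := (Finset.add_sum_erase _ _ (Finset.mem_univ l)).symm
  have hpos : 0 < r l + R := hsum ▸ Finset.sum_pos (fun i _ ↦ hr i) ⟨l, Finset.mem_univ l⟩
  have hexp_sum :
      Real.exp ((r l + R) * ts / ET) = Real.exp (r l * ts / ET) * Real.exp (R / ET * ts) := by
    rw [← Real.exp_add]
    ring_nf
  rw [hsum, hexp_sum, Real.exp_neg]
  field_simp

/-- If `S 1, …, S M` are independent exponential random variables, `S i` with rate
`r i / E[T]`, then the probability that source `l` wins channel access without
collision, i.e. `S i ≥ S l + t_s` for all `i ≠ l`, equals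
`r l * exp(r l * t_s / E[T]) / (exp((∑ r i) * t_s / E[T]) * ∑ r i)`. -/
theorem stmt_4 {Ω : Type*} [MeasureSpace Ω] (hΩ : IsProbabilityMeasure (ℙ : Measure Ω))
    (M : ℕ) (hM : 0 < M) (r : Fin M → ℝ) (hr : ∀ i, 0 < r i)
    (ET ts : ℝ) (hET : 0 < ET) (hts : 0 ≤ ts)
    (S : Fin M → Ω → ℝ) (hmeas : ∀ i, Measurable (S i))
    (hindep : iIndepFun S ℙ)
    (hexp : ∀ i, Measure.map (S i) ℙ = expMeasure (r i / ET))
    (l : Fin M) :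
    ℙ {ω | ∀ i, i ≠ l → S l ω + ts ≤ S i ω} =
      ENNReal.ofReal (r l * Real.exp (r l * ts / ET) /
        (Real.exp ((∑ i, r i) * ts / ET) * ∑ i, r i)) :=
  stmt_4_general hΩ M r hr ET ts hET hts S hmeas hindep hexp l
end

section
/- Suppose $\sum_{i=1}^M b_i \geq 1$ where $b_i, w_i > 0$. For any $r_1,\ldots,r_M > 0$ satisfying $r_l \leq b_l(\sum_{i=1}^M r_i + 1)$ for all $l$, we have $\sum_{l=1}^M \frac{w_l(1 + \sum_{i=1}^M r_i)}{r_l} + \sum_{l=1}^M w_l \geq \sum_{i=1}^M \left[\frac{w_i}{\min\{b_i, \beta^\star\sqrt{w_i}\}} + w_i\right]$, where $\beta^\star$ is the unique root of $\sum_{i=1}^M \min\{b_i, \beta^\star\sqrt{w_i}\} = 1$. -/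
lemma aux10 (w x y β : ℝ) (hw : 0 < w) (hx : 0 < x) (hy : 0 < y) (hβ : 0 < β)
    (hcase : (x ≤ y ∧ y^2 ≤ β^2 * w) ∨ y^2 = β^2 * w) :
    w / y + (1/β^2) * (y - x) ≤ w / x := by
  have conv : w / y + (w/y^2) * (y - x) ≤ w / x := by
    have h : w / x - (w / y + (w/y^2)*(y-x)) = w*(x-y)^2/(x*y^2) := by
      field_simp; ring
    have h2 : 0 ≤ w*(x-y)^2/(x*y^2) := by positivity
    linarith
  rcases hcase with ⟨hxy, hle⟩ | heq
  · have h1 : 1/β^2 ≤ w/y^2 := by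
      rw [div_le_div_iff₀ (by positivity) (by positivity)]
      nlinarith
    nlinarith [mul_le_mul_of_nonneg_right h1 (sub_nonneg.mpr hxy)]
  · have hwy : w / y^2 = 1/β^2 := by
      rw [heq]; field_simp
    rw [hwy] at conv
    exact conv

theorem stmt_10 (M : ℕ) (w b : Fin M → ℝ)
    (hw : ∀ i, 0 < w i) (hb : ∀ i, 0 < b i) (hsum : 1 ≤ ∑ i, b i)
    (β : ℝ) (hβ : ∑ i, min (b i) (β * Real.sqrt (w i)) = 1)
    (r : Fin M → ℝ) (hr : ∀ i, 0 < r i)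
    (hcon : ∀ l, r l ≤ b l * ((∑ i, r i) + 1)) :
    ∑ i, (w i / min (b i) (β * Real.sqrt (w i)) + w i) ≤
      (∑ l, w l * (1 + ∑ i, r i) / r l) + ∑ l, w l := by
  set S := ∑ i, r i with hS
  have hS0 : 0 ≤ S := Finset.sum_nonneg fun i _ => (hr i).le
  set T := S + 1 with hT
  have hT0 : 0 < T := by positivity
  have hβ0 : 0 < β := by
    by_contra h
    push_neg at h
    have : ∑ i, min (b i) (β * Real.sqrt (w i)) ≤ 0 :=
      Finset.sum_nonpos fun i _ =>
        le_trans (min_le_right _ _)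
          (mul_nonpos_of_nonpos_of_nonneg h (Real.sqrt_nonneg _))
    linarith [hβ]
  set m : Fin M → ℝ := fun i => min (b i) (β * Real.sqrt (w i)) with hm
  have hm0 : ∀ i, 0 < m i := fun i =>
    lt_min (hb i) (mul_pos hβ0 (Real.sqrt_pos.mpr (hw i)))
  have key : ∀ i, w i / m i + (1/β^2) * (m i - r i / T) ≤ w i * T / r i := by
    intro i
    have heq : w i * T / r i = w i / (r i / T) := by
      field_simp
    rw [heq]
    apply aux10 _ _ _ _ (hw i) (div_pos (hr i) hT0) (hm0 i) hβ0
    rcases le_total (b i) (β * Real.sqrt (w i)) with hle | hle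
    · left
      have hmi : m i = b i := min_eq_left hle
      constructor
      · rw [hmi, div_le_iff₀ hT0]
        exact hcon i
      · rw [hmi]
        nlinarith [Real.sq_sqrt (hw i).le, Real.sqrt_nonneg (w i), hb i]
    · right
      have hmi : m i = β * Real.sqrt (w i) := min_eq_right hle
      rw [hmi]
      nlinarith [Real.sq_sqrt (hw i).le]
  have hsum2 : ∑ i, (w i / m i + (1/β^2) * (m i - r i / T)) ≤ ∑ i, w i * T / r i :=
    Finset.sum_le_sum fun i _ => key i
  have hsplit : ∑ i, (w i / m i + (1/β^2) * (m i - r i / T))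
      = (∑ i, w i / m i) + (1/β^2) * (1 - S / T) := by
    rw [Finset.sum_add_distrib, ← Finset.mul_sum]
    congr 1
    rw [Finset.sum_sub_distrib, ← Finset.sum_div, hβ]
  have hpos : 0 ≤ (1/β^2) * (1 - S / T) := by
    apply mul_nonneg (by positivity)
    have : S / T ≤ 1 := by
      rw [div_le_one hT0]; linarith
    linarith
  have hmain : ∑ i, w i / m i ≤ ∑ i, w i * T / r i := by
    rw [hsplit] at hsum2; linarith
  have hgoal2 : ∑ l, w l * (1 + S) / r l = ∑ l, w l * T / r l := by
    apply Finset.sum_congr rfl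
    intro l _
    rw [hT, add_comm]
  rw [Finset.sum_add_distrib, hgoal2]
  linarith
end

section
/- Let $w_i, b_i > 0$ with $\sum_{i=1}^M b_i < 1$, and $\epsilon = t_s/\mathbb{E}[T] \geq 0$. For any $r_1,\ldots,r_M > 0$ satisfying $r_l \leq b_l(\sum_{i=1}^M r_i + 1)$ for all $l$, we have $\sum_{l=1}^M \frac{w_l e^{-r_l \epsilon}}{r_l} e^{(\sum_i r_i)\epsilon}(1 + \sum_i r_i) + \sum_l w_l \geq \sum_{l=1}^M \frac{w_l}{b_l} e^{-\epsilon \sum_i b_i / (1 - \sum_i b_i)} + \sum_l w_l$. -/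
/-! Termwise: since `ε ∑ b / (1 - ∑ b) ≥ 0` the left exponential is at most `1`; the constraint
`r l ≤ b l (∑ r + 1)` gives `1 / b l ≤ (1 + ∑ r) / r l`; and `r l ≤ ∑ r` makes the combined
exponential `exp ((∑ r - r l) ε)` at least `1`. -/

open Real Finset

lemma one_le_exp_neg_mul_mul_exp_mul {r S ε : ℝ} (hrS : r ≤ S) (hε : 0 ≤ ε) :
    1 ≤ exp (-(r * ε)) * exp (S * ε) := by
  rw [← exp_add]
  exact one_le_exp (by nlinarith)

lemma div_le_mul_one_add_div_of_le_mul {w b r S : ℝ} (hw : 0 ≤ w) (hb : 0 < b) (hr : 0 < r)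
    (hcon : r ≤ b * (S + 1)) : w / b ≤ w * (1 + S) / r := by
  rw [div_le_div_iff₀ hb hr]
  nlinarith

lemma div_mul_le_mul_exp_div_mul_exp {w b r S ε c : ℝ} (hw : 0 ≤ w) (hb : 0 < b) (hr : 0 < r)
    (hrS : r ≤ S) (hcon : r ≤ b * (S + 1)) (hε : 0 ≤ ε) (hc : c ≤ 1) :
    w / b * c ≤ w * exp (-(r * ε)) / r * exp (S * ε) * (1 + S) := by
  have hS : 0 ≤ 1 + S := by linarith
  calc w / b * c ≤ w / b := mul_le_of_le_one_right (div_nonneg hw hb.le) hc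
    _ ≤ w * (1 + S) / r := div_le_mul_one_add_div_of_le_mul hw hb hr hcon
    _ ≤ w * (1 + S) / r * (exp (-(r * ε)) * exp (S * ε)) :=
        le_mul_of_one_le_right (by positivity) (one_le_exp_neg_mul_mul_exp_mul hrS hε)
    _ = w * exp (-(r * ε)) / r * exp (S * ε) * (1 + S) := by ring

theorem stmt_12 (M : ℕ) (w b : Fin M → ℝ)
    (hw : ∀ i, 0 < w i) (hb : ∀ i, 0 < b i) (hsum : ∑ i, b i < 1)
    (ε : ℝ) (hε : 0 ≤ ε) (r : Fin M → ℝ) (hr : ∀ i, 0 < r i)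
    (hcon : ∀ l, r l ≤ b l * ((∑ i, r i) + 1)) :
    (∑ l, w l / b l * Real.exp (-(ε * (∑ i, b i) / (1 - ∑ i, b i)))) + ∑ l, w l ≤
      (∑ l, w l * Real.exp (-(r l * ε)) / r l *
        Real.exp ((∑ i, r i) * ε) * (1 + ∑ i, r i)) + ∑ l, w l := by
  have hexp_le_one : exp (-(ε * (∑ i, b i) / (1 - ∑ i, b i))) ≤ 1 :=
    exp_le_one_iff.2 <| neg_nonpos.2 <| div_nonneg
      (mul_nonneg hε (sum_nonneg fun i _ => (hb i).le)) (sub_nonneg.2 hsum.le)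
  refine add_le_add_left (sum_le_sum fun l _ => ?_) _
  exact div_mul_le_mul_exp_div_mul_exp (hw l).le (hb l) (hr l)
    (single_le_sum (fun i _ => (hr i).le) (mem_univ l)) (hcon l) hε hexp_le_one
end

section
/- Consider minimizing $\sum_{i=1}^M (w_i/a_i + w_i)$ over $a_i > 0$ subject to $a_l \leq b_l$ for all $l$ and $\sum_{i=1}^M a_i \leq 1$, where $w_i, b_i > 0$. If $\sum_{i=1}^M b_i \geq 1$, the optimal solution is $a_l^\star = \min\{b_l, \beta^\star\sqrt{w_l}\}$, where $\beta^\star$ is the unique root of $\sum_{i=1}^M \min\{b_i, \beta^\star\sqrt{w_i}\} = 1$, and the optimal value is $\sum_{i=1}^M [w_i/\min\{b_i,\beta^\star\sqrt{w_i}\} + w_i]$. -/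
/-!
Weak duality with multiplier `1 / β²` for the constraint `∑ a ≤ 1`: for each source, the
candidate `c = min b (β √w)` minimises `w / a + a / β²` over `0 < a ≤ b`, so
`w / c ≤ w / a + (a - c) / β²`. Summing, the correction term is `(∑ a - 1) / β² ≤ 0`.
-/

open Finset

lemma pos_of_sum_min_mul_eq_one {ι : Type*} {s : Finset ι} {b t : ι → ℝ} {β : ℝ}
    (ht : ∀ i, 0 ≤ t i) (h : ∑ i ∈ s, min (b i) (β * t i) = 1) : 0 < β := by
  by_contra! hβ
  have : ∑ i ∈ s, min (b i) (β * t i) ≤ 0 :=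
    sum_nonpos fun i _ => (min_le_right _ _).trans (mul_nonpos_of_nonpos_of_nonneg hβ (ht i))
  linarith

lemma sq_div_min_le {s a b β : ℝ} (hs : 0 < s) (hβ : 0 < β) (ha : 0 < a) (hab : a ≤ b) :
    s ^ 2 / min b (β * s) ≤ s ^ 2 / a + (a - min b (β * s)) / β ^ 2 := by
  rcases le_total (β * s) b with hβs | hbβs
  · -- unconstrained optimum: AM-GM in the form `(β s - a)² ≥ 0`
    rw [min_eq_right hβs, div_add_div _ _ ha.ne' (by positivity), div_le_div_iff₀ (by positivity)
      (by positivity)]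
    nlinarith [mul_nonneg (mul_pos hβ hs).le (sq_nonneg (β * s - a))]
  · -- box constraint active: `a ≤ b ≤ β s` gives `a b ≤ β² s²`, and `a - b ≤ 0`
    have hb : 0 < b := ha.trans_le hab
    rw [min_eq_left hbβs, div_add_div _ _ ha.ne' (by positivity), div_le_div_iff₀ hb
      (by positivity)]
    have hab_le : a * b ≤ (β * s) ^ 2 := by nlinarith
    nlinarith [mul_nonneg (sub_nonneg.mpr hab) (sub_nonneg.mpr hab_le)]

theorem stmt_13_general (M : ℕ) (w b : Fin M → ℝ)
    (hw : ∀ i, 0 < w i) (hb : ∀ i, 0 < b i)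
    (β : ℝ) (hβ : ∑ i, min (b i) (β * Real.sqrt (w i)) = 1) :
    (∀ l, 0 < min (b l) (β * Real.sqrt (w l))) ∧
    (∀ l, min (b l) (β * Real.sqrt (w l)) ≤ b l) ∧
    (∑ i, min (b i) (β * Real.sqrt (w i))) ≤ 1 ∧
    (∀ a : Fin M → ℝ, (∀ i, 0 < a i) → (∀ l, a l ≤ b l) → (∑ i, a i) ≤ 1 →
      ∑ i, (w i / min (b i) (β * Real.sqrt (w i)) + w i) ≤
        ∑ i, (w i / a i + w i)) := by
  have hβpos : 0 < β := pos_of_sum_min_mul_eq_one (fun i => Real.sqrt_nonneg (w i)) hβ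
  set c := fun i => min (b i) (β * Real.sqrt (w i))
  refine ⟨fun l => lt_min (hb l) (mul_pos hβpos (Real.sqrt_pos.mpr (hw l))),
    fun l => min_le_left _ _, hβ.le, fun a ha hab hasum => ?_⟩
  have key (i : Fin M) : w i / c i ≤ w i / a i + (a i - c i) / β ^ 2 := by
    simpa only [Real.sq_sqrt (hw i).le] using
      sq_div_min_le (Real.sqrt_pos.mpr (hw i)) hβpos (ha i) (hab i)
  calc ∑ i, (w i / c i + w i)
      ≤ ∑ i, (w i / a i + w i + (a i - c i) / β ^ 2) :=
        sum_le_sum fun i _ => by linarith [key i]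
    _ = ∑ i, (w i / a i + w i) + (∑ i, a i - ∑ i, c i) / β ^ 2 := by
        rw [sum_add_distrib, ← sum_div, sum_sub_distrib]
    _ ≤ ∑ i, (w i / a i + w i) := by
        have : (∑ i, a i - ∑ i, c i) / β ^ 2 ≤ 0 :=
          div_nonpos_of_nonpos_of_nonneg (by rw [hβ]; linarith) (sq_nonneg β)
        linarith

theorem stmt_13 (M : ℕ) (w b : Fin M → ℝ)
    (hw : ∀ i, 0 < w i) (hb : ∀ i, 0 < b i) (hsum : 1 ≤ ∑ i, b i)
    (β : ℝ) (hβ : ∑ i, min (b i) (β * Real.sqrt (w i)) = 1) :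
    (∀ l, 0 < min (b l) (β * Real.sqrt (w l))) ∧
    (∀ l, min (b l) (β * Real.sqrt (w l)) ≤ b l) ∧
    (∑ i, min (b i) (β * Real.sqrt (w i))) ≤ 1 ∧
    (∀ a : Fin M → ℝ, (∀ i, 0 < a i) → (∀ l, a l ≤ b l) → (∑ i, a i) ≤ 1 →
      ∑ i, (w i / min (b i) (β * Real.sqrt (w i)) + w i) ≤
        ∑ i, (w i / a i + w i)) :=
  stmt_13_general M w b hw hb β hβ
end

section
/- Let $\epsilon \geq 0$, $b_l > 0$ with $\sum_{i=1}^M b_i < 1$, and set $u_l = b_l/(1-\sum_{i=1}^M b_i)$. Define $c_l$ as the positive root of the quadratic $c^2 [u_l \epsilon (\sum_i u_i - u_l)] + c(u_l - b_l \sum_i u_i) - b_l = 0$ (when $\sum_i u_i > u_l$; and $c_l$ solving the linear equation otherwise). Then for $c = \min_l c_l$, the vector $r_l = c\, u_l$ satisfies $\frac{c u_l + c^2 u_l \epsilon(\sum_i u_i - u_l)}{c \sum_i u_i + 1} \leq b_l$ for all $l$. -/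
theorem stmt_17 (M : ℕ) (hM : 0 < M) (b : Fin M → ℝ) (hb : ∀ i, 0 < b i)
    (hsum : ∑ i, b i < 1) (ε : ℝ) (hε : 0 ≤ ε)
    (u : Fin M → ℝ) (hu : ∀ l, u l = b l / (1 - ∑ i, b i))
    (c : Fin M → ℝ) (hcpos : ∀ l, 0 < c l)
    (hroot : ∀ l, (c l) ^ 2 * (u l * ε * ((∑ i, u i) - u l)) +
      c l * (u l - b l * ∑ i, u i) - b l = 0) :
    ∀ l, ((⨅ j, c j) * u l + (⨅ j, c j) ^ 2 * u l * ε * ((∑ i, u i) - u l)) /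
        ((⨅ j, c j) * (∑ i, u i) + 1) ≤ b l := by
  intro l
  haveI : Nonempty (Fin M) := ⟨⟨0, hM⟩⟩
  have hden : (0:ℝ) < 1 - ∑ i, b i := by linarith
  have hupos : ∀ i, 0 < u i := fun i => by
    rw [hu i]; exact div_pos (hb i) hden
  set S := ∑ i, u i with hS
  have hSpos : 0 < S := Finset.sum_pos (fun i _ => hupos i) ⟨l, Finset.mem_univ l⟩
  have hSl : u l ≤ S :=
    Finset.single_le_sum (fun i _ => (hupos i).le) (Finset.mem_univ l)
  obtain ⟨j, hj⟩ := Finite.exists_min c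
  have hbdd : BddBelow (Set.range c) := (Set.finite_range c).bddBelow
  have hm : (⨅ j, c j) = c j :=
    le_antisymm (ciInf_le hbdd j) (le_ciInf hj)
  set m := ⨅ j, c j with hmdef
  have hmpos : 0 < m := hm ▸ hcpos j
  have hml : m ≤ c l := hm ▸ hj l
  have hroot' : c l * u l + (c l) ^ 2 * u l * ε * (S - u l) = b l * (c l * S + 1) := by
    have := hroot l; ring_nf at this ⊢; linarith
  have hdpos : 0 < m * S + 1 := by positivity
  have hcpos' : 0 < c l * S + 1 := by nlinarith [mul_pos (hcpos l) hSpos]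
  rw [div_le_iff₀ hdpos]
  have hD : 0 ≤ S - u l := sub_nonneg.mpr hSl
  have key : (m * u l + m ^ 2 * u l * ε * (S - u l)) * (c l * S + 1)
      ≤ (c l * u l + (c l) ^ 2 * u l * ε * (S - u l)) * (m * S + 1) := by
    have hveD : 0 ≤ u l * ε * (S - u l) := mul_nonneg (mul_nonneg (hupos l).le hε) hD
    have hxa : 0 ≤ c l - m := sub_nonneg.mpr hml
    nlinarith [mul_nonneg (hupos l).le hxa,
      mul_nonneg hveD (mul_nonneg (mul_nonneg (mul_nonneg hmpos.le (hcpos l).le) hSpos.le) hxa),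
      mul_nonneg hveD (mul_nonneg (add_nonneg (hcpos l).le hmpos.le) hxa)]
  rw [hroot'] at key
  nlinarith [key, hcpos']
end
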